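/- arXiv:1102.0750 — 2 statements merged into one kernel-verified Lean document; each statement's English description precedes it below -/
import Mathlib

section
/- For 0 ≤ k ≤ n-1 with n ≥ 2, the set of points x ∈ ℝ^n at which the derivative of Γ_k^+(x) = (μ_k^n(x), x_{k+1}) has rank strictly less than 2 is exactly the x_{k+1}-coordinate axis {x ∈ ℝ^n : x_i = 0 for all i ≠ k+1}, and the image of this singular set under Γ_k^+ is the parabola {(t,z) ∈ ℝ^2 : t = z^2}. -/
noncomputable section

/-- The standard index-`k` Morse model `μ_k^n` on `ℝ^n`. -/
def mu (n k : ℕ) (x : Fin n → ℝ) : ℝ :=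
  ∑ i : Fin n, if (i : ℕ) < k then -(x i) ^ 2 else (x i) ^ 2

/-- The local model `Γ_k^+` for a forward index-`k` critical point. -/
def gammaPlus (n k : ℕ) (hk : k < n) (x : Fin n → ℝ) : ℝ × ℝ :=
  (mu n k x, x ⟨k, hk⟩)

/-! The derivative of `Γ_k^+` at `x` is `v ↦ (2 ∑ ±x_i v_i, v_k)`. On the `x_k`-axis its first
component is `2 x_k` times the second, so its rank is at most one; off the axis some `x_i ≠ 0`
with `i ≠ k`, and then `e_i` and `e_k` have linearly independent images. On the axis
`μ(x) = x_k²`, so the axis is mapped onto the parabola. Indices are `Fin n`, so `x_k` is the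
paper's `x_{k+1}`. -/

open ContinuousLinearMap

theorem LinearMap.two_le_rank_of_linearIndependent_pair {K V W : Type*} [Field K]
    [AddCommGroup V] [Module K V] [AddCommGroup W] [Module K W] (f : V →ₗ[K] W) {a b : V}
    (h : LinearIndependent K ![f a, f b]) : 2 ≤ f.rank := by
  have hspan : Submodule.span K (Set.range ![f a, f b]) ≤ LinearMap.range f := by
    rw [Submodule.span_le]
    rintro _ ⟨i, rfl⟩
    fin_cases i <;> exact LinearMap.mem_range_self f _
  calc (2 : Cardinal) = Module.rank K (Submodule.span K (Set.range ![f a, f b])) := by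
        rw [rank_span h, ← Cardinal.lift_uzero (Cardinal.mk _),
          Cardinal.mk_range_eq_of_injective h.injective]
        simp
    _ ≤ f.rank := Submodule.rank_mono hspan

lemma mu_eq_sum_mul_sq (n k : ℕ) :
    mu n k = fun x => ∑ i : Fin n, (if (i : ℕ) < k then -1 else 1) * x i ^ 2 := by
  funext x
  refine Finset.sum_congr rfl fun i _ => ?_
  split_ifs <;> ring

lemma mu_eq_sq_of_forall_ne_eq_zero {n k : ℕ} {x : Fin n → ℝ} (j : Fin n) (hj : k ≤ j)
    (hx : ∀ i, i ≠ j → x i = 0) : mu n k x = x j ^ 2 := by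
  rw [mu, Finset.sum_eq_single j (fun i _ hi => by simp [hx i hi]) (by simp)]
  simp [hj.not_gt]

lemma hasFDerivAt_mu (n k : ℕ) (x : Fin n → ℝ) :
    HasFDerivAt (mu n k)
      (∑ i : Fin n, (2 * (if (i : ℕ) < k then -1 else 1) * x i) • (proj i : (Fin n → ℝ) →L[ℝ] ℝ))
      x := by
  rw [mu_eq_sum_mul_sq]
  refine HasFDerivAt.fun_sum fun i _ => ?_
  have hi : HasFDerivAt (fun y : Fin n → ℝ => y i) (proj i : (Fin n → ℝ) →L[ℝ] ℝ) x :=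
    hasFDerivAt_apply i x
  refine ((hi.pow 2).const_mul _).congr_fderiv ?_
  ext v
  simp only [smul_apply, proj_apply, smul_eq_mul, nsmul_eq_mul]
  ring

lemma fderiv_gammaPlus_apply (n k : ℕ) (hk : k < n) (x v : Fin n → ℝ) :
    fderiv ℝ (gammaPlus n k hk) x v =
      (∑ i : Fin n, 2 * (if (i : ℕ) < k then -1 else 1) * x i * v i, v ⟨k, hk⟩) := by
  have hproj : HasFDerivAt (fun y : Fin n → ℝ => y ⟨k, hk⟩) (proj ⟨k, hk⟩ : (Fin n → ℝ) →L[ℝ] ℝ) x :=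
    hasFDerivAt_apply _ x
  unfold gammaPlus
  rw [((hasFDerivAt_mu n k x).prodMk hproj).fderiv]
  simp only [prod_apply, sum_apply, smul_apply, proj_apply, smul_eq_mul]

lemma rank_fderiv_gammaPlus_le_one {n k : ℕ} (hk : k < n) {x : Fin n → ℝ}
    (hx : ∀ i, i ≠ ⟨k, hk⟩ → x i = 0) :
    LinearMap.rank (fderiv ℝ (gammaPlus n k hk) x).toLinearMap ≤ 1 := by
  rw [LinearMap.rank, rank_submodule_le_one_iff']
  refine ⟨(2 * x ⟨k, hk⟩, 1), ?_⟩
  rintro _ ⟨v, rfl⟩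
  refine Submodule.mem_span_singleton.2 ⟨v ⟨k, hk⟩, ?_⟩
  rw [ContinuousLinearMap.coe_coe, fderiv_gammaPlus_apply,
    Finset.sum_eq_single ⟨k, hk⟩ (fun i _ hi => by simp [hx i hi]) (by simp)]
  simp
  ring

lemma two_le_rank_fderiv_gammaPlus {n k : ℕ} (hk : k < n) {x : Fin n → ℝ} {i : Fin n}
    (hi : i ≠ ⟨k, hk⟩) (hxi : x i ≠ 0) :
    2 ≤ LinearMap.rank (fderiv ℝ (gammaPlus n k hk) x).toLinearMap := by
  refine LinearMap.two_le_rank_of_linearIndependent_pair _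
    (a := Pi.single i 1) (b := Pi.single ⟨k, hk⟩ 1) ?_
  -- the images of `e_i` and `e_k` are `(±2 x_i, 0)` and `(2 x_k, 1)`
  rw [LinearIndependent.pair_iff]
  intro s t hst
  simp [fderiv_gammaPlus_apply, Pi.single_apply, hi] at hst
  obtain ⟨hs, rfl⟩ := hst
  refine ⟨?_, rfl⟩
  split_ifs at hs <;> simpa [hxi] using hs

theorem stmt2_general (n k : ℕ) (hk : k < n) :
    {x : Fin n → ℝ |
        LinearMap.rank (fderiv ℝ (gammaPlus n k hk) x).toLinearMap < 2} =
      {x : Fin n → ℝ | ∀ i : Fin n, i ≠ ⟨k, hk⟩ → x i = 0} ∧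
    gammaPlus n k hk '' {x : Fin n → ℝ | ∀ i : Fin n, i ≠ ⟨k, hk⟩ → x i = 0} =
      {p : ℝ × ℝ | p.1 = p.2 ^ 2} := by
  have hkk : k ≤ ((⟨k, hk⟩ : Fin n) : ℕ) := le_rfl
  constructor
  · ext x
    refine ⟨fun hrank i hi => ?_, fun hx => ?_⟩
    · by_contra hxi
      exact (two_le_rank_fderiv_gammaPlus hk hi hxi).not_gt hrank
    · exact (rank_fderiv_gammaPlus_le_one hk hx).trans_lt Cardinal.one_lt_two
  · ext p
    refine ⟨?_, fun hp => ?_⟩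
    · rintro ⟨x, hx, rfl⟩
      exact mu_eq_sq_of_forall_ne_eq_zero _ hkk hx
    · refine ⟨Pi.single ⟨k, hk⟩ p.2, fun i hi => Pi.single_eq_of_ne hi _, Prod.ext ?_ ?_⟩
      · rw [gammaPlus, mu_eq_sq_of_forall_ne_eq_zero _ hkk fun i hi => Pi.single_eq_of_ne hi _]
        simpa using hp.symm
      · simp [gammaPlus]

/-- The singular set of `Γ_k^+` (points where the derivative has rank `< 2`) is exactly the
`x_{k+1}`-coordinate axis, and its image is the parabola `t = z²`. -/
theorem stmt2 (n k : ℕ) (hn : 2 ≤ n) (hk : k < n) :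
    {x : Fin n → ℝ |
        LinearMap.rank (fderiv ℝ (gammaPlus n k hk) x).toLinearMap < 2} =
      {x : Fin n → ℝ | ∀ i : Fin n, i ≠ ⟨k, hk⟩ → x i = 0} ∧
    gammaPlus n k hk '' {x : Fin n → ℝ | ∀ i : Fin n, i ≠ ⟨k, hk⟩ → x i = 0} =
      {p : ℝ × ℝ | p.1 = p.2 ^ 2} :=
  stmt2_general n k hk
end
end

section
/- Let t > 0 and define h_t : ℝ^2 → ℝ by h_t(x,y) = x^3 - 3xy^2 + t·(x^2 + y^2). Then h_t has exactly four critical points: (0,0), (-2t/3, 0), (t/3, t/√3), and (t/3, -t/√3). All four are nondegenerate; (0,0) is a local minimum (Morse index 0) and the other three are saddle points (Morse index 1). -/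
/-! The splitting `h_t = x²(x + t) + y²(t - 3x)` shows that the origin is a local minimum.
The gradient `(3x² - 3y² + 2tx, 2y(t - 3x))` vanishes either on the axis `y = 0`, where
`x(3x + 2t) = 0`, or on the line `x = t/3`, where `3y² = t²`. At each critical point an explicit
Hessian-orthogonal basis exhibits the signature. -/

noncomputable section

/-- The perturbed monkey saddle `h_t(x,y) = x³ - 3xy² + t(x² + y²)`. -/
def hmonkey (t : ℝ) (p : ℝ × ℝ) : ℝ :=
  p.1 ^ 3 - 3 * p.1 * p.2 ^ 2 + t * (p.1 ^ 2 + p.2 ^ 2)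

/-- The Hessian bilinear form of `f : ℝ² → ℝ` at `p`. -/
def hess2 (f : ℝ × ℝ → ℝ) (p v w : ℝ × ℝ) : ℝ :=
  iteratedFDeriv ℝ 2 f p ![v, w]

/-- `p` is a nondegenerate critical point of Morse index 0 (local minimum type): the Hessian
diagonalizes with two positive eigenvalues. -/
def IndexZeroAt (f : ℝ × ℝ → ℝ) (p : ℝ × ℝ) : Prop :=
  ∃ v w : ℝ × ℝ, LinearIndependent ℝ ![v, w] ∧
    hess2 f p v w = 0 ∧ hess2 f p w v = 0 ∧ 0 < hess2 f p v v ∧ 0 < hess2 f p w w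

/-- `p` is a nondegenerate critical point of Morse index 1 (saddle type): the Hessian
diagonalizes with one negative and one positive eigenvalue. -/
def IndexOneAt (f : ℝ × ℝ → ℝ) (p : ℝ × ℝ) : Prop :=
  ∃ v w : ℝ × ℝ, LinearIndependent ℝ ![v, w] ∧
    hess2 f p v w = 0 ∧ hess2 f p w v = 0 ∧ hess2 f p v v < 0 ∧ 0 < hess2 f p w w

open ContinuousLinearMap Real Topology

theorem smul_fst_add_smul_snd_eq_zero_iff {R : Type*} [CommSemiring R] [TopologicalSpace R]
    [IsTopologicalSemiring R] (α β : R) : α • fst R R R + β • snd R R R = 0 ↔ α = 0 ∧ β = 0 := by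
  refine ⟨fun h => ⟨by simpa using DFunLike.congr_fun h (1, 0),
    by simpa using DFunLike.congr_fun h (0, 1)⟩, ?_⟩
  rintro ⟨rfl, rfl⟩
  ext <;> simp

theorem linearIndependent_pair_of_det_ne_zero {v w : ℝ × ℝ} (h : v.1 * w.2 - v.2 * w.1 ≠ 0) :
    LinearIndependent ℝ ![v, w] := by
  refine LinearIndependent.pair_iff.2 fun a b hab => ?_
  simp only [Prod.ext_iff, Prod.fst_add, Prod.snd_add, Prod.smul_fst, Prod.smul_snd, smul_eq_mul,
    Prod.fst_zero, Prod.snd_zero] at hab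
  obtain ⟨h1, h2⟩ := hab
  constructor
  · refine (mul_eq_zero.1 ?_).resolve_right h
    linear_combination w.2 * h1 - w.1 * h2
  · refine (mul_eq_zero.1 ?_).resolve_right h
    linear_combination v.1 * h2 - v.2 * h1

theorem hess2_eq_of_hasFDerivAt {f a b : ℝ × ℝ → ℝ} {a' b' : ℝ × ℝ →L[ℝ] ℝ} {p : ℝ × ℝ}
    (hf : ∀ q, HasFDerivAt f (a q • fst ℝ ℝ ℝ + b q • snd ℝ ℝ ℝ) q)
    (ha : HasFDerivAt a a' p) (hb : HasFDerivAt b b' p) (v w : ℝ × ℝ) :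
    hess2 f p v w = a' v * w.1 + b' v * w.2 := by
  have hDf : fderiv ℝ f = fun q => a q • fst ℝ ℝ ℝ + b q • snd ℝ ℝ ℝ :=
    funext fun q => (hf q).fderiv
  rw [hess2, iteratedFDeriv_two_apply, hDf,
    ((ha.smul_const (fst ℝ ℝ ℝ)).fun_add (hb.smul_const (snd ℝ ℝ ℝ))).fderiv]
  simp

section

variable (t : ℝ) (p : ℝ × ℝ)

theorem hasFDerivAt_hmonkey :
    HasFDerivAt (hmonkey t)
      ((3 * p.1 ^ 2 - 3 * p.2 ^ 2 + 2 * t * p.1) • fst ℝ ℝ ℝ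
        + (2 * p.2 * (t - 3 * p.1)) • snd ℝ ℝ ℝ) p := by
  have hx : HasFDerivAt Prod.fst (fst ℝ ℝ ℝ) p := hasFDerivAt_fst
  have hy : HasFDerivAt Prod.snd (snd ℝ ℝ ℝ) p := hasFDerivAt_snd
  exact ((hx.pow 3).fun_sub ((hx.const_mul 3).fun_mul (hy.pow 2))).fun_add
    (((hx.pow 2).fun_add (hy.pow 2)).const_mul t) |>.congr_fderiv (by ext <;> simp <;> ring)

theorem hess2_hmonkey (v w : ℝ × ℝ) :
    hess2 (hmonkey t) p v w = (6 * p.1 + 2 * t) * v.1 * w.1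
      - 6 * p.2 * (v.1 * w.2 + v.2 * w.1) + (2 * t - 6 * p.1) * v.2 * w.2 := by
  have hx : HasFDerivAt Prod.fst (fst ℝ ℝ ℝ) p := hasFDerivAt_fst
  have hy : HasFDerivAt Prod.snd (snd ℝ ℝ ℝ) p := hasFDerivAt_snd
  have ha : HasFDerivAt (fun q : ℝ × ℝ => 3 * q.1 ^ 2 - 3 * q.2 ^ 2 + 2 * t * q.1)
      ((6 * p.1 + 2 * t) • fst ℝ ℝ ℝ + (-6 * p.2) • snd ℝ ℝ ℝ) p :=
    (((hx.pow 2).const_mul 3).fun_sub ((hy.pow 2).const_mul 3)).fun_add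
      (hx.const_mul (2 * t)) |>.congr_fderiv (by ext <;> simp <;> ring)
  have hb : HasFDerivAt (fun q : ℝ × ℝ => 2 * q.2 * (t - 3 * q.1))
      ((-6 * p.2) • fst ℝ ℝ ℝ + (2 * t - 6 * p.1) • snd ℝ ℝ ℝ) p :=
    (hy.const_mul 2).fun_mul ((hx.const_mul 3).const_sub t) |>.congr_fderiv
      (by ext <;> simp <;> ring)
  rw [hess2_eq_of_hasFDerivAt (hasFDerivAt_hmonkey t) ha hb]
  simp only [neg_mul, add_apply, smul_apply, coe_fst', smul_eq_mul, coe_snd']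
  ring

end

theorem three_mul_div_sqrt_three_sq (t : ℝ) : 3 * (t / √3) ^ 2 = t ^ 2 := by
  rw [div_pow, sq_sqrt zero_le_three]
  ring

theorem setOf_fderiv_hmonkey_eq_zero (t : ℝ) :
    {p : ℝ × ℝ | fderiv ℝ (hmonkey t) p = 0} =
      {(0, 0), (-2 * t / 3, 0), (t / 3, t / √3), (t / 3, -t / √3)} := by
  ext ⟨x, y⟩
  have hs := three_mul_div_sqrt_three_sq t
  simp only [Set.mem_ofPred_eq, (hasFDerivAt_hmonkey t _).fderiv,
    smul_fst_add_smul_snd_eq_zero_iff, Set.mem_insert_iff, Set.mem_singleton_iff, Prod.mk.injEq,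
    neg_div]
  constructor
  · rintro ⟨hx, hy⟩
    rcases mul_eq_zero.1 hy with h2y | hx3
    · obtain rfl : y = 0 := by linarith
      have : x * (3 * x + 2 * t) = 0 := by linear_combination hx
      rcases mul_eq_zero.1 this with rfl | h3x
      · exact Or.inl ⟨rfl, rfl⟩
      · exact Or.inr <| Or.inl ⟨by linarith, rfl⟩
    · obtain rfl : x = t / 3 := by linarith
      have : (y - t / √3) * (y + t / √3) = 0 := by
        linear_combination (-1 / 3) * hx - (1 / 3) * hs
      rcases mul_eq_zero.1 this with hy | hy
      · exact Or.inr <| Or.inr <| Or.inl ⟨rfl, by linarith⟩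
      · exact Or.inr <| Or.inr <| Or.inr ⟨rfl, by linarith⟩
  · rintro (⟨rfl, rfl⟩ | ⟨rfl, rfl⟩ | ⟨rfl, rfl⟩ | ⟨rfl, rfl⟩) <;>
      refine ⟨?_, ?_⟩ <;> linarith

theorem isLocalMin_hmonkey_zero {t : ℝ} (ht : 0 < t) : IsLocalMin (hmonkey t) (0, 0) := by
  have hnear : ∀ᶠ p : ℝ × ℝ in 𝓝 (0, 0), p.1 ∈ Set.Ioo (-t) (t / 3) :=
    continuous_fst.continuousAt.eventually_mem (Ioo_mem_nhds (by linarith) (by positivity))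
  filter_upwards [hnear] with p ⟨hxl, hxu⟩
  have hsplit : hmonkey t p = p.1 ^ 2 * (p.1 + t) + p.2 ^ 2 * (t - 3 * p.1) := by
    unfold hmonkey
    ring
  have hzero : hmonkey t (0, 0) = 0 := by simp [hmonkey]
  rw [hzero, hsplit]
  exact add_nonneg (mul_nonneg (sq_nonneg _) (by linarith)) (mul_nonneg (sq_nonneg _) (by linarith))

theorem indexZeroAt_hmonkey_zero {t : ℝ} (ht : 0 < t) : IndexZeroAt (hmonkey t) (0, 0) := by
  refine ⟨(1, 0), (0, 1), linearIndependent_pair_of_det_ne_zero (by norm_num), ?_, ?_, ?_, ?_⟩ <;>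
    rw [hess2_hmonkey] <;> linarith

theorem indexOneAt_hmonkey_axis {t : ℝ} (ht : 0 < t) : IndexOneAt (hmonkey t) (-2 * t / 3, 0) := by
  refine ⟨(1, 0), (0, 1), linearIndependent_pair_of_det_ne_zero (by norm_num), ?_, ?_, ?_, ?_⟩ <;>
    rw [hess2_hmonkey] <;> linarith

theorem indexOneAt_hmonkey_of_three_mul_sq_eq {t y : ℝ} (ht : 0 < t) (hy : 3 * y ^ 2 = t ^ 2) :
    IndexOneAt (hmonkey t) (t / 3, y) := by
  have hy0 : 0 < t * y ^ 2 := mul_pos ht (by nlinarith [pow_pos ht 2])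
  -- `(3y, 2t)` spans the Hessian-orthogonal complement of `(1, 0)`, the Hessian being
  -- `[[4t, -6y], [-6y, 0]]` there.
  refine ⟨(3 * y, 2 * t), (1, 0), linearIndependent_pair_of_det_ne_zero (by simpa using ht.ne'),
    ?_, ?_, ?_, ?_⟩ <;> rw [hess2_hmonkey] <;> nlinarith

/-- For `t > 0`, `h_t` has exactly the four critical points `(0,0)`, `(-2t/3, 0)`,
`(t/3, ±t/√3)`; all are nondegenerate, `(0,0)` is a local minimum of Morse index 0 and the
other three are saddles of Morse index 1. -/
theorem stmt14 (t : ℝ) (ht : 0 < t) :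
    {p : ℝ × ℝ | fderiv ℝ (hmonkey t) p = 0} =
      {((0 : ℝ), (0 : ℝ)), (-2 * t / 3, 0), (t / 3, t / Real.sqrt 3),
        (t / 3, -t / Real.sqrt 3)} ∧
    IsLocalMin (hmonkey t) (0, 0) ∧ IndexZeroAt (hmonkey t) (0, 0) ∧
    IndexOneAt (hmonkey t) (-2 * t / 3, 0) ∧
    IndexOneAt (hmonkey t) (t / 3, t / Real.sqrt 3) ∧
    IndexOneAt (hmonkey t) (t / 3, -t / Real.sqrt 3) :=
  ⟨setOf_fderiv_hmonkey_eq_zero t, isLocalMin_hmonkey_zero ht, indexZeroAt_hmonkey_zero ht,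
    indexOneAt_hmonkey_axis ht,
    indexOneAt_hmonkey_of_three_mul_sq_eq ht (three_mul_div_sqrt_three_sq t),
    indexOneAt_hmonkey_of_three_mul_sq_eq ht
      (by rw [neg_div, neg_sq]; exact three_mul_div_sqrt_three_sq t)⟩
end
end
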